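/- Let F(x₁,x₂,x₃) = (2x₁² + 2x₁x₂ + x₁x₃, −x₁x₂ + x₂² + 3x₂x₃, 3x₂x₃ − x₃²) be the vector field of the three-dimensional Lotka–Volterra system on ℂ³. If V = (V¹, V², V³) is an analytic vector field in a neighbourhood of the origin of ℂ³ satisfying (L_F V)^i = Σ_s F^s ∂V^i/∂x^s − Σ_l V^l ∂F^i/∂x^l = 0 for i = 1, 2, 3 (i.e., V is an analytic tensor invariant of type (1,0)), then there exists a constant c ∈ ℂ such that V = c·F. -/

import Mathlib

open scoped BigOperators

/-- Partial derivative of `f : ℂⁿ → ℂ` in the `s`-th coordinate direction at `x`. -/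
noncomputable def pderivC {n : ℕ} (f : (Fin n → ℂ) → ℂ) (s : Fin n) (x : Fin n → ℂ) : ℂ :=
  fderiv ℂ f x (Pi.single s 1)

/-- Components of the Lie derivative `L_F T` of a type-`(p,q)` tensor field `T` on `ℂⁿ`
along the vector field `F`. -/
noncomputable def lieDeriv {n p q : ℕ} (F : Fin n → (Fin n → ℂ) → ℂ)
    (T : (Fin p → Fin n) → (Fin q → Fin n) → (Fin n → ℂ) → ℂ)
    (i : Fin p → Fin n) (j : Fin q → Fin n) (x : Fin n → ℂ) : ℂ :=
  (∑ s, F s x * pderivC (T i j) s x)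
    + ∑ a : Fin q, ∑ k, T i (Function.update j a k) x * pderivC (F k) (j a) x
    - ∑ b : Fin p, ∑ l, T (Function.update i b l) j x * pderivC (F (i b)) l x
/-- The vector field of the three-dimensional Lotka–Volterra system
`ẋ₁ = 2x₁² + 2x₁x₂ + x₁x₃, ẋ₂ = −x₁x₂ + x₂² + 3x₂x₃, ẋ₃ = 3x₂x₃ − x₃²` on `ℂ³`. -/
noncomputable def FLV : Fin 3 → (Fin 3 → ℂ) → ℂ :=
  ![fun x => 2 * (x 0) ^ 2 + 2 * x 0 * x 1 + x 0 * x 2,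
    fun x => -(x 0 * x 1) + (x 1) ^ 2 + 3 * x 1 * x 2,
    fun x => 3 * x 1 * x 2 - (x 2) ^ 2]

/-!
Write `d i a b c = ∂₀ᵃ ∂₁ᵇ ∂₂ᶜ Vᵢ (0)`. By the Leibniz rule `∂^μ (x_s f) (0) = μ_s ∂^(μ - e_s) f (0)`,
and since the field has Lotka–Volterra form `Fₜ = xₜ ∑_q B_tq x_q`, differentiating the invariance
equations at `0` yields linear relations among the `d i a b c` of a single total degree.

In the relations at `(a, b + 1, c)` the coefficient of `d i a b c` is `(b + 1)(2a + b + 3c - k)`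
with `k ∈ {2, 3}`, and all other unknowns have a smaller weight `a + 2c`; from degree `4` on this
coefficient never vanishes, so all derivatives of degree `≥ 4` vanish. In degrees `≤ 3` the
relations form a finite triangular system whose only solutions are the multiples of the
derivatives of `F` itself (in degree `2`). Hence `V - c F` has vanishing Taylor series at `0` for
a suitable `c`, so it vanishes near `0`, and on all of `U` by the identity theorem.
-/

open Filter Topology
open scoped ContDiff

@[fun_prop]
theorem analyticAt_apply {𝕜 ι : Type*} [NontriviallyNormedField 𝕜] [Fintype ι] (s : ι)
    (x : ι → 𝕜) : AnalyticAt 𝕜 (fun y : ι → 𝕜 => y s) x :=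
  (ContinuousLinearMap.proj s : (ι → 𝕜) →L[𝕜] 𝕜).analyticAt x

section PartialDerivatives

variable {n : ℕ} {f g : (Fin n → ℂ) → ℂ} {x : Fin n → ℂ}

theorem AnalyticAt.pderivC (hf : AnalyticAt ℂ f x) (s : Fin n) :
    AnalyticAt ℂ (pderivC f s) x :=
  ((ContinuousLinearMap.apply ℂ ℂ (Pi.single s 1 : Fin n → ℂ)).analyticAt _).comp hf.fderiv

theorem Filter.EventuallyEq.pderivC (h : f =ᶠ[𝓝 x] g) (s : Fin n) :
    pderivC f s =ᶠ[𝓝 x] pderivC g s :=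
  (h.fderiv (𝕜 := ℂ)).mono fun y hy => by simp only [_root_.pderivC, hy]

theorem pderivC_add (hf : DifferentiableAt ℂ f x) (hg : DifferentiableAt ℂ g x) (s : Fin n) :
    pderivC (fun y => f y + g y) s x = pderivC f s x + pderivC g s x := by
  simp [pderivC, fderiv_fun_add hf hg]

theorem pderivC_const_mul (hf : DifferentiableAt ℂ f x) (c : ℂ) (s : Fin n) :
    pderivC (fun y => c * f y) s x = c * pderivC f s x := by
  simp [pderivC, fderiv_const_mul hf]

theorem pderivC_coord_mul (hf : DifferentiableAt ℂ f x) (s t : Fin n) :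
    pderivC (fun y => y t * f y) s x = x t * pderivC f s x + if s = t then f x else 0 := by
  have hproj := (ContinuousLinearMap.proj t : (Fin n → ℂ) →L[ℂ] ℂ).differentiableAt (x := x)
  change fderiv ℂ (fun y => (ContinuousLinearMap.proj t : (Fin n → ℂ) →L[ℂ] ℂ) y * f y) x _ = _
  rw [fderiv_fun_mul hproj hf, ContinuousLinearMap.fderiv]
  simp [pderivC, Pi.single_apply, eq_comm]

theorem pderivC_linear (w : Fin n → ℂ) (s : Fin n) :
    pderivC (fun y => ∑ q, w q * y q) s x = w s := by
  have : (fun y : Fin n → ℂ => ∑ q, w q * y q) = ⇑(∑ q, w q • ContinuousLinearMap.proj q :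
      (Fin n → ℂ) →L[ℂ] ℂ) := by
    ext y; simp
  simp [pderivC, this, ContinuousLinearMap.fderiv, Pi.single_apply]

theorem pderivC_pderivC_comm (hf : AnalyticAt ℂ f x) (s t : Fin n) :
    pderivC (pderivC f t) s x = pderivC (pderivC f s) t x := by
  have hd : DifferentiableAt ℂ (fderiv ℂ f) x := hf.fderiv.differentiableAt
  have hsymm := hf.contDiffAt.isSymmSndFDerivAt (n := ω) le_top
  change fderiv ℂ (fun y => fderiv ℂ f y (Pi.single t 1)) x (Pi.single s 1)
    = fderiv ℂ (fun y => fderiv ℂ f y (Pi.single s 1)) x (Pi.single t 1)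
  rw [fderiv_clm_apply hd (differentiableAt_const _), fderiv_clm_apply hd (differentiableAt_const _)]
  simpa using hsymm _ _

end PartialDerivatives

section IteratedPartialDerivatives

variable {n : ℕ} {f g : (Fin n → ℂ) → ℂ} {x : Fin n → ℂ}

noncomputable def iterPDeriv (l : List (Fin n)) (f : (Fin n → ℂ) → ℂ) : (Fin n → ℂ) → ℂ :=
  l.foldr (fun s g => pderivC g s) f

@[simp] theorem iterPDeriv_nil : iterPDeriv [] f = f := rfl

@[simp] theorem iterPDeriv_cons (s : Fin n) (l : List (Fin n)) :
    iterPDeriv (s :: l) f = pderivC (iterPDeriv l f) s := rfl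

theorem iterPDeriv_append_singleton (l : List (Fin n)) (s : Fin n) :
    iterPDeriv (l ++ [s]) f = iterPDeriv l (pderivC f s) := by
  simp [iterPDeriv, List.foldr_append]

theorem AnalyticAt.iterPDeriv (hf : AnalyticAt ℂ f x) (l : List (Fin n)) :
    AnalyticAt ℂ (iterPDeriv l f) x := by
  induction l with
  | nil => exact hf
  | cons s l ih => exact ih.pderivC s

theorem Filter.EventuallyEq.iterPDeriv (h : f =ᶠ[𝓝 x] g) (l : List (Fin n)) :
    iterPDeriv l f =ᶠ[𝓝 x] iterPDeriv l g := by
  induction l with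
  | nil => exact h
  | cons s l ih => exact ih.pderivC s

theorem iterPDeriv_add (hf : AnalyticAt ℂ f x) (hg : AnalyticAt ℂ g x) (l : List (Fin n)) :
    iterPDeriv l (fun y => f y + g y) =ᶠ[𝓝 x]
      fun y => iterPDeriv l f y + iterPDeriv l g y := by
  induction l with
  | nil => rfl
  | cons s l ih =>
    filter_upwards [ih.pderivC s, hf.eventually_analyticAt, hg.eventually_analyticAt]
      with y hy hfy hgy
    rw [iterPDeriv_cons, hy, pderivC_add ((hfy.iterPDeriv l).differentiableAt)
      ((hgy.iterPDeriv l).differentiableAt)]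
    rfl

theorem iterPDeriv_const_mul (hf : AnalyticAt ℂ f x) (c : ℂ) (l : List (Fin n)) :
    iterPDeriv l (fun y => c * f y) =ᶠ[𝓝 x] fun y => c * iterPDeriv l f y := by
  induction l with
  | nil => rfl
  | cons s l ih =>
    filter_upwards [ih.pderivC s, hf.eventually_analyticAt] with y hy hfy
    rw [iterPDeriv_cons, hy, pderivC_const_mul ((hfy.iterPDeriv l).differentiableAt)]
    rfl

theorem iterPDeriv_perm (hf : AnalyticAt ℂ f x) {l l' : List (Fin n)} (h : l.Perm l') :
    iterPDeriv l f =ᶠ[𝓝 x] iterPDeriv l' f := by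
  induction h with
  | nil => rfl
  | cons s _ ih => exact ih.pderivC s
  | swap s t l =>
    filter_upwards [hf.eventually_analyticAt] with y hfy
    exact pderivC_pderivC_comm (hfy.iterPDeriv l) t s
  | trans _ _ ih ih' => exact ih.trans ih'

theorem iterPDeriv_coord_mul (hf : AnalyticAt ℂ f x) (s : Fin n) (l : List (Fin n)) :
    iterPDeriv l (fun y => y s * f y) =ᶠ[𝓝 x]
      fun y => y s * iterPDeriv l f y + l.count s * iterPDeriv (l.erase s) f y := by
  induction l with
  | nil => filter_upwards with y; simp
  | cons t l ih =>
    filter_upwards [ih.pderivC t, hf.eventually_analyticAt] with y hy hfy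
    have hd := fun l' => (hfy.iterPDeriv l').differentiableAt
    rw [iterPDeriv_cons, hy, pderivC_add ((differentiableAt_apply s y).fun_mul (hd l))
      ((hd _).const_mul _), pderivC_coord_mul (hd l), pderivC_const_mul (hd _)]
    by_cases hts : t = s
    · subst hts
      have hcount : (l.count t : ℂ) * pderivC (iterPDeriv (l.erase t) f) t y
          = l.count t * iterPDeriv l f y := by
        by_cases hmem : t ∈ l
        · rw [← iterPDeriv_cons, (iterPDeriv_perm hfy (List.perm_cons_erase hmem)).eq_of_nhds]
        · simp [List.count_eq_zero_of_not_mem hmem]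
      simp only [if_pos, iterPDeriv_cons, List.count_cons_self, List.erase_cons_head]
      push_cast
      linear_combination hcount
    · simp [hts, List.erase_cons_tail (a := s) (b := t) (by simpa using hts)]

end IteratedPartialDerivatives

section DerivativesAtZero

variable {n : ℕ} {f g : (Fin n → ℂ) → ℂ}

/-- `∂^μ f (0)`. The order `μ.toList` of the derivatives is arbitrary; it is irrelevant for
analytic `f` (`pderivZero_coe`). -/
noncomputable def pderivZero (μ : Multiset (Fin n)) (f : (Fin n → ℂ) → ℂ) : ℂ :=
  iterPDeriv μ.toList f 0

theorem pderivZero_coe (hf : AnalyticAt ℂ f 0) (l : List (Fin n)) :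
    pderivZero l f = iterPDeriv l f 0 :=
  (iterPDeriv_perm hf (Multiset.coe_eq_coe.mp (by simp))).eq_of_nhds

@[simp] theorem pderivZero_zero : pderivZero 0 f = f 0 := by
  simp [pderivZero]

theorem pderivZero_congr (h : f =ᶠ[𝓝 0] g) (μ : Multiset (Fin n)) :
    pderivZero μ f = pderivZero μ g :=
  (h.iterPDeriv _).eq_of_nhds

theorem pderivZero_add (hf : AnalyticAt ℂ f 0) (hg : AnalyticAt ℂ g 0) (μ : Multiset (Fin n)) :
    pderivZero μ (fun y => f y + g y) = pderivZero μ f + pderivZero μ g :=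
  (iterPDeriv_add hf hg _).eq_of_nhds

theorem pderivZero_const_mul (hf : AnalyticAt ℂ f 0) (c : ℂ) (μ : Multiset (Fin n)) :
    pderivZero μ (fun y => c * f y) = c * pderivZero μ f :=
  (iterPDeriv_const_mul hf c _).eq_of_nhds

@[simp] theorem pderivZero_const_zero (μ : Multiset (Fin n)) :
    pderivZero μ (fun _ => 0) = 0 := by
  simpa using pderivZero_const_mul (f := fun _ => 0) analyticAt_const 0 μ

theorem pderivZero_sub (hf : AnalyticAt ℂ f 0) (hg : AnalyticAt ℂ g 0) (μ : Multiset (Fin n)) :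
    pderivZero μ (fun y => f y - g y) = pderivZero μ f - pderivZero μ g := by
  have h := pderivZero_add hf (analyticAt_const.mul hg) μ (g := fun y => -1 * g y)
  rw [pderivZero_const_mul hg] at h
  simpa [← sub_eq_add_neg] using h

theorem pderivZero_sum {ι : Type*} (s : Finset ι) {F : ι → (Fin n → ℂ) → ℂ}
    (hF : ∀ j ∈ s, AnalyticAt ℂ (F j) 0) (μ : Multiset (Fin n)) :
    pderivZero μ (fun y => ∑ j ∈ s, F j y) = ∑ j ∈ s, pderivZero μ (F j) := by
  classical
  induction s using Finset.induction_on with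
  | empty => simp
  | insert j s hj ih =>
    simp only [Finset.sum_insert hj]
    rw [pderivZero_add (hF j (by simp)) (Finset.analyticAt_fun_sum _ fun k hk => hF k (by simp [hk])),
      ih fun k hk => hF k (by simp [hk])]

theorem pderivZero_pderivC (hf : AnalyticAt ℂ f 0) (s : Fin n) (μ : Multiset (Fin n)) :
    pderivZero μ (pderivC f s) = pderivZero (s ::ₘ μ) f := by
  rw [pderivZero, ← iterPDeriv_append_singleton, ← pderivZero_coe hf]
  rw [← Multiset.coe_add, Multiset.coe_toList, Multiset.coe_singleton, add_comm,
    Multiset.singleton_add]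

theorem pderivZero_coord_mul (hf : AnalyticAt ℂ f 0) (s : Fin n) (μ : Multiset (Fin n)) :
    pderivZero μ (fun y => y s * f y) = μ.count s * pderivZero (μ.erase s) f := by
  rw [pderivZero]
  conv_rhs => rw [← Multiset.coe_toList μ, Multiset.coe_count, Multiset.coe_erase, pderivZero_coe hf]
  simpa using (iterPDeriv_coord_mul hf s μ.toList).eq_of_nhds

theorem pderivZero_coord_mul_pderivC (hf : AnalyticAt ℂ f 0) (s : Fin n) (μ : Multiset (Fin n)) :
    pderivZero μ (fun y => y s * pderivC f s y) = μ.count s * pderivZero μ f := by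
  rw [pderivZero_coord_mul (hf.pderivC s), pderivZero_pderivC hf]
  by_cases hs : s ∈ μ
  · rw [Multiset.cons_erase hs]
  · simp [Multiset.count_eq_zero_of_notMem hs]

end DerivativesAtZero

section TaylorSeries

theorem iteratedFDeriv_apply_const_eventuallyEq {𝕜 E F : Type*} [NontriviallyNormedField 𝕜]
    [NormedAddCommGroup E] [NormedSpace 𝕜 E] [NormedAddCommGroup F] [NormedSpace 𝕜 F]
    [CompleteSpace F] {f : E → F} {x : E} (hf : AnalyticAt 𝕜 f x) (y : E) (k : ℕ) :
    (fun z => iteratedFDeriv 𝕜 k f z fun _ => y) =ᶠ[𝓝 x]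
      (fun g z => fderiv 𝕜 g z y)^[k] f := by
  induction k with
  | zero => filter_upwards with z; simp
  | succ k ih =>
    filter_upwards [ih.fderiv (𝕜 := 𝕜), hf.eventually_analyticAt] with z hz hfz
    rw [Function.iterate_succ_apply', iteratedFDeriv_succ_apply_left,
      ← fderiv_continuousMultilinear_apply_const_apply
        ((hfz.contDiffAt (n := k + 1)).differentiableAt_iteratedFDeriv (by norm_cast; omega))]
    exact DFunLike.congr_fun hz y

variable {n : ℕ} {f : (Fin n → ℂ) → ℂ}

theorem fderiv_apply_eq_sum_pderivC (y z : Fin n → ℂ) :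
    fderiv ℂ f z y = ∑ s, y s * pderivC f s z := by
  conv_lhs => rw [pi_eq_sum_univ' y]
  rw [map_sum]
  simp only [map_smul, smul_eq_mul, pderivC]

theorem pderivZero_fderiv_apply_eq_zero {g : (Fin n → ℂ) → ℂ} (hg : AnalyticAt ℂ g 0)
    (h : ∀ μ, pderivZero μ g = 0) (y : Fin n → ℂ) (μ : Multiset (Fin n)) :
    pderivZero μ (fun z => fderiv ℂ g z y) = 0 := by
  simp only [fderiv_apply_eq_sum_pderivC y]
  rw [pderivZero_sum (F := fun s z => y s * pderivC g s z) _
    fun s _ => analyticAt_const.mul (hg.pderivC s)]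
  refine Finset.sum_eq_zero fun s _ => ?_
  rw [pderivZero_const_mul (hg.pderivC s), pderivZero_pderivC hg, h, mul_zero]

theorem eventuallyEq_zero_of_pderivZero_eq_zero (hf : AnalyticAt ℂ f 0)
    (h : ∀ μ, pderivZero μ f = 0) : f =ᶠ[𝓝 0] 0 := by
  have hdir : ∀ (y : Fin n → ℂ) (k : ℕ), AnalyticAt ℂ ((fun g z => fderiv ℂ g z y)^[k] f) 0 ∧
      ∀ μ, pderivZero μ ((fun g z => fderiv ℂ g z y)^[k] f) = 0 := by
    intro y k
    induction k with
    | zero => exact ⟨hf, h⟩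
    | succ k ih =>
      rw [Function.iterate_succ_apply']
      exact ⟨((ContinuousLinearMap.apply ℂ ℂ y).analyticAt _).comp ih.1.fderiv,
        pderivZero_fderiv_apply_eq_zero ih.1 ih.2 y⟩
  obtain ⟨p, r, hp⟩ := hf
  filter_upwards [Metric.eball_mem_nhds 0 hp.r_pos] with y hy
  have hterm : ∀ k, iteratedFDeriv ℂ k f 0 (fun _ => y) = 0 := fun k =>
    ((iteratedFDeriv_apply_const_eventuallyEq ⟨p, r, hp⟩ y k).eq_of_nhds).trans
      (pderivZero_zero.symm.trans ((hdir y k).2 0))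
  have hsum := hp.hasSum_iteratedFDeriv hy
  simp only [hterm, smul_zero, zero_add] at hsum
  exact hsum.unique hasSum_zero

end TaylorSeries

theorem Multiset.natCast_count_mul_count_erase {α R : Type*} [DecidableEq α] [Ring R]
    (μ : Multiset α) (q t : α) :
    (μ.count q : R) * (μ.erase q).count t = μ.count q * (μ.count t - if t = q then 1 else 0) := by
  by_cases hq : q ∈ μ
  · by_cases htq : t = q
    · subst htq
      simp [Multiset.count_erase_self, Nat.cast_pred (Multiset.count_pos.mpr hq)]
    · simp [Multiset.count_erase_of_ne htq, htq]
  · simp [Multiset.count_eq_zero_of_notMem hq]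

section LotkaVolterra

variable {n : ℕ}

def lotkaVolterra (B : Matrix (Fin n) (Fin n) ℂ) (t : Fin n) (x : Fin n → ℂ) : ℂ :=
  x t * ∑ q, B t q * x q

theorem analyticAt_lotkaVolterra (B : Matrix (Fin n) (Fin n) ℂ) (t : Fin n) (x : Fin n → ℂ) :
    AnalyticAt ℂ (lotkaVolterra B t) x := by
  unfold lotkaVolterra
  fun_prop

theorem pderivC_lotkaVolterra (B : Matrix (Fin n) (Fin n) ℂ) (i l : Fin n) (x : Fin n → ℂ) :
    pderivC (lotkaVolterra B i) l x = x i * B i l + if l = i then ∑ q, B i q * x q else 0 := by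
  have hlin : DifferentiableAt ℂ (fun y : Fin n → ℂ => ∑ q, B i q * y q) x := by fun_prop
  rw [show lotkaVolterra B i = fun y => y i * ∑ q, B i q * y q from rfl,
    pderivC_coord_mul hlin, pderivC_linear]

theorem lie_lotkaVolterra_eq (B : Matrix (Fin n) (Fin n) ℂ) (V : Fin n → (Fin n → ℂ) → ℂ)
    (i : Fin n) (x : Fin n → ℂ) :
    (∑ t, lotkaVolterra B t x * pderivC (V i) t x) - ∑ t, V t x * pderivC (lotkaVolterra B i) t x
      = ∑ t, ∑ q, B t q * (x q * (x t * pderivC (V i) t x)) - ∑ q, B i q * (x q * V i x)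
        - x i * ∑ l, B i l * V l x := by
  simp only [pderivC_lotkaVolterra, lotkaVolterra, mul_add, Finset.sum_add_distrib, mul_ite,
    mul_zero, Finset.sum_ite_eq', Finset.mem_univ, if_true, Finset.mul_sum, Finset.sum_mul]
  have e1 : ∀ t q, x t * (B t q * x q) * pderivC (V i) t x
      = B t q * (x q * (x t * pderivC (V i) t x)) := fun _ _ => by ring
  have e2 : ∀ l, V l x * (x i * B i l) = x i * (B i l * V l x) := fun _ => by ring
  have e3 : ∀ q, V i x * (B i q * x q) = B i q * (x q * V i x) := fun _ => by ring
  simp only [e1, e2, e3]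
  ring

theorem pderivZero_lie_lotkaVolterra (B : Matrix (Fin n) (Fin n) ℂ)
    {V : Fin n → (Fin n → ℂ) → ℂ} (hV : ∀ i, AnalyticAt ℂ (V i) 0) (i : Fin n)
    (μ : Multiset (Fin n)) :
    pderivZero μ (fun x => (∑ t, lotkaVolterra B t x * pderivC (V i) t x)
        - ∑ t, V t x * pderivC (lotkaVolterra B i) t x)
      = ∑ q, μ.count q * (∑ t, B t q * μ.count t - B q q - B i q) * pderivZero (μ.erase q) (V i)
        - μ.count i * ∑ l, B i l * pderivZero (μ.erase i) (V l) := by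
  have hD : ∀ t, AnalyticAt ℂ (pderivC (V i) t) 0 := fun t => (hV i).pderivC t
  simp only [lie_lotkaVolterra_eq]
  rw [pderivZero_sub (by fun_prop) (by fun_prop), pderivZero_sub (by fun_prop) (by fun_prop)]
  simp (disch := (try intros); fun_prop) only [pderivZero_sum, pderivZero_const_mul,
    pderivZero_coord_mul, pderivZero_coord_mul_pderivC (hV i)]
  congr 1
  rw [Finset.sum_comm, ← Finset.sum_sub_distrib]
  refine Finset.sum_congr rfl fun q _ => ?_
  have hcount : ∀ t, B t q * (μ.count q * ((μ.erase q).count t * pderivZero (μ.erase q) (V i)))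
      = μ.count q * pderivZero (μ.erase q) (V i)
        * (B t q * μ.count t - B t q * if t = q then 1 else 0) := fun t => by
    linear_combination (B t q * pderivZero (μ.erase q) (V i)) *
      Multiset.natCast_count_mul_count_erase (R := ℂ) μ q t
  simp only [hcount, ← Finset.mul_sum, Finset.sum_sub_distrib, mul_ite, mul_one, mul_zero,
    Finset.sum_ite_eq', Finset.mem_univ, if_true]
  ring

end LotkaVolterra

/-- With `d i a b c = ∂₀ᵃ ∂₁ᵇ ∂₂ᶜ Vᵢ (0)`, these relations say that the same derivative of the
three components of `L_F V` vanishes at `0`. The truncated subtractions in the indices only occur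
where the factor in front of the term is `0`. -/
def LVRelations (d : Fin 3 → ℕ → ℕ → ℕ → ℂ) (a b c : ℕ) : Prop :=
  a * (2 * a - b - 6) * d 0 (a - 1) b c + b * (2 * a + b + 3 * c - 3) * d 0 a (b - 1) c
      + c * (a + 3 * b - c) * d 0 a b (c - 1) - 2 * a * d 1 (a - 1) b c - a * d 2 (a - 1) b c
    = 0 ∧
  a * (2 * a - b - 1) * d 1 (a - 1) b c + b * (2 * a + b + 3 * c - 3) * d 1 a (b - 1) c
      + c * (a + 3 * b - c - 2) * d 1 a b (c - 1) + b * d 0 a (b - 1) c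
      - 3 * b * d 2 a (b - 1) c = 0 ∧
  a * (2 * a - b - 2) * d 2 (a - 1) b c + b * (2 * a + b + 3 * c - 4) * d 2 a (b - 1) c
      + c * (a + 3 * b - c + 3) * d 2 a b (c - 1) - 3 * c * d 1 a b (c - 1) = 0

def LVRecurrence (d : Fin 3 → ℕ → ℕ → ℕ → ℂ) : Prop :=
  ∀ a b c, LVRelations d a b c

namespace LVRecurrence

variable {d e : Fin 3 → ℕ → ℕ → ℕ → ℂ}

theorem sub_const_mul (hd : LVRecurrence d) (he : LVRecurrence e) (k : ℂ) :
    LVRecurrence fun i a b c => d i a b c - k * e i a b c := fun a b c => by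
  obtain ⟨d0, d1, d2⟩ := hd a b c
  obtain ⟨e0, e1, e2⟩ := he a b c
  exact ⟨by linear_combination d0 - k * e0, by linear_combination d1 - k * e1,
    by linear_combination d2 - k * e2⟩

theorem eq_zero_of_four_le (hd : LVRecurrence d) (a b c : ℕ) (habc : 4 ≤ a + b + c) (i : Fin 3) :
    d i a b c = 0 := by
  have ha : ∀ i, (a : ℂ) * d i (a - 1) (b + 1) c = 0 := by
    intro i
    rcases Nat.eq_zero_or_pos a with ha | ha
    · simp [ha]
    · rw [eq_zero_of_four_le hd (a - 1) (b + 1) c (by omega) i, mul_zero]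
  have hc : ∀ i, (c : ℂ) * d i a (b + 1) (c - 1) = 0 := by
    intro i
    rcases Nat.eq_zero_or_pos c with hc | hc
    · simp [hc]
    · rw [eq_zero_of_four_le hd a (b + 1) (c - 1) (by omega) i, mul_zero]
  have hw2 : (2 * a + b + 3 * c - 2 : ℂ) ≠ 0 := by
    rw [sub_ne_zero]; exact_mod_cast (show 2 * a + b + 3 * c ≠ 2 by omega)
  have hw3 : (2 * a + b + 3 * c - 3 : ℂ) ≠ 0 := by
    rw [sub_ne_zero]; exact_mod_cast (show 2 * a + b + 3 * c ≠ 3 by omega)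
  have hb : (b + 1 : ℂ) ≠ 0 := by exact_mod_cast b.succ_ne_zero
  obtain ⟨e0, e1, e2⟩ := hd a (b + 1) c
  simp only [Nat.add_sub_cancel, Nat.cast_add, Nat.cast_one] at e0 e1 e2
  have h0 : d 0 a b c = 0 := by
    refine (mul_eq_zero.mp ?_).resolve_left (mul_ne_zero hb hw2)
    linear_combination e0 - (2 * a - b - 7) * ha 0 - (a + 3 * b + 3 - c) * hc 0 + 2 * ha 1 + ha 2
  have h2 : d 2 a b c = 0 := by
    refine (mul_eq_zero.mp ?_).resolve_left (mul_ne_zero hb hw3)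
    linear_combination e2 - (2 * a - b - 3) * ha 2 - (a + 3 * b - c + 6) * hc 2 + 3 * hc 1
  have h1 : d 1 a b c = 0 := by
    refine (mul_eq_zero.mp ?_).resolve_left (mul_ne_zero hb hw2)
    linear_combination e1 - (2 * a - b - 2) * ha 1 - (a + 3 * b + 1 - c) * hc 1 - (b + 1) * h0
      + 3 * (b + 1) * h2
  fin_cases i <;> assumption
termination_by a + 2 * c

set_option maxHeartbeats 2000000 in
theorem eq_zero_of_le_three (hd : LVRecurrence d) (h200 : d 0 2 0 0 = 0) (a b c : ℕ)
    (habc : a + b + c ≤ 3) (i : Fin 3) : d i a b c = 0 := by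
  suffices ∀ a < 4, ∀ b < 4, ∀ c < 4, a + b + c ≤ 3 → d 0 a b c = 0 ∧ d 1 a b c = 0 ∧ d 2 a b c = 0 by
    obtain ⟨h0, h1, h2⟩ := this a (by omega) b (by omega) c (by omega) habc
    fin_cases i <;> assumption
  have key : ∀ a < 5, ∀ b < 5, ∀ c < 5, a + b + c ≤ 4 → LVRelations d a b c :=
    fun a _ b _ c _ _ => hd a b c
  simp only [Nat.forall_lt_succ_right, Nat.not_lt_zero, IsEmpty.forall_iff, forall_const,
    true_and] at key ⊢
  norm_num [LVRelations] at key ⊢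
  casesm* _ ∧ _
  -- In a suitable order each relation involves a single coefficient not yet known to vanish,
  -- so repeated substitution solves the system.
  simp_all

theorem eq_zero (hd : LVRecurrence d) (h200 : d 0 2 0 0 = 0) (i : Fin 3) (a b c : ℕ) :
    d i a b c = 0 := by
  rcases le_or_gt (a + b + c) 3 with h | h
  · exact hd.eq_zero_of_le_three h200 a b c h i
  · exact hd.eq_zero_of_four_le a b c h i

end LVRecurrence

section ThreeDimensional

open Multiset

def multiIndex (a b c : ℕ) : Multiset (Fin 3) := replicate a 0 + replicate b 1 + replicate c 2

@[simp] theorem count_zero_multiIndex (a b c : ℕ) : (multiIndex a b c).count 0 = a := by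
  simp [multiIndex, count_replicate]

@[simp] theorem count_one_multiIndex (a b c : ℕ) : (multiIndex a b c).count 1 = b := by
  simp [multiIndex, count_replicate]

@[simp] theorem count_two_multiIndex (a b c : ℕ) : (multiIndex a b c).count 2 = c := by
  simp [multiIndex, count_replicate]

theorem multiIndex_count (μ : Multiset (Fin 3)) :
    multiIndex (μ.count 0) (μ.count 1) (μ.count 2) = μ := by
  ext s
  fin_cases s <;> simp

@[simp] theorem erase_zero_multiIndex (a b c : ℕ) :
    (multiIndex a b c).erase 0 = multiIndex (a - 1) b c := by
  ext s; fin_cases s <;> simp [count_erase_self, count_erase_of_ne]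

@[simp] theorem erase_one_multiIndex (a b c : ℕ) :
    (multiIndex a b c).erase 1 = multiIndex a (b - 1) c := by
  ext s; fin_cases s <;> simp [count_erase_self, count_erase_of_ne]

@[simp] theorem erase_two_multiIndex (a b c : ℕ) :
    (multiIndex a b c).erase 2 = multiIndex a b (c - 1) := by
  ext s; fin_cases s <;> simp [count_erase_self, count_erase_of_ne]

def lvMatrix : Matrix (Fin 3) (Fin 3) ℂ := !![2, 2, 1; -1, 1, 3; 0, 3, -1]

theorem FLV_eq_lotkaVolterra : FLV = lotkaVolterra lvMatrix := by
  ext t x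
  fin_cases t <;> simp [FLV, lotkaVolterra, lvMatrix, Fin.sum_univ_three] <;> ring

theorem lvRecurrence_pderivZero {V : Fin 3 → (Fin 3 → ℂ) → ℂ} (hV : ∀ i, AnalyticAt ℂ (V i) 0)
    (hinv : ∀ i, ∀ᶠ x in 𝓝 0,
      (∑ t, FLV t x * pderivC (V i) t x) - ∑ t, V t x * pderivC (FLV i) t x = 0) :
    LVRecurrence fun i a b c => pderivZero (multiIndex a b c) (V i) := by
  intro a b c
  have h : ∀ i, pderivZero (multiIndex a b c) (fun x =>
      (∑ t, FLV t x * pderivC (V i) t x) - ∑ t, V t x * pderivC (FLV i) t x) = 0 := fun i => by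
    rw [pderivZero_congr (hinv i), pderivZero_const_zero]
  simp only [FLV_eq_lotkaVolterra, pderivZero_lie_lotkaVolterra lvMatrix hV] at h
  have h0 := h 0
  have h1 := h 1
  have h2 := h 2
  simp [Fin.sum_univ_three, lvMatrix] at h0 h1 h2
  exact ⟨by linear_combination h0, by linear_combination h1, by linear_combination h2⟩

theorem pderivZero_multiIndex_two_zero_zero_FLV : pderivZero (multiIndex 2 0 0) (FLV 0) = 4 := by
  have : FLV 0 = fun x => x 0 * ∑ q, lvMatrix 0 q * (x q * 1) := by
    funext x
    simp [FLV_eq_lotkaVolterra, lotkaVolterra]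
  rw [this]
  simp (disch := (try intros); fun_prop) only [pderivZero_coord_mul, pderivZero_sum,
    pderivZero_const_mul]
  simp [Fin.sum_univ_three, lvMatrix, multiIndex]
  norm_num

end ThreeDimensional

/-- Any analytic tensor invariant of type `(1,0)` (Lie symmetry) of the
three-dimensional Lotka–Volterra system near the origin of `ℂ³` is the vector field
itself up to a constant factor. -/
theorem symmetry_of_LV
    (U : Set (Fin 3 → ℂ)) (hU : IsOpen U) (hUconn : IsPreconnected U)
    (h0 : (0 : Fin 3 → ℂ) ∈ U)
    (V : Fin 3 → (Fin 3 → ℂ) → ℂ)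
    (hVan : ∀ i, AnalyticOnNhd ℂ (V i) U)
    (hinv : ∀ (i : Fin 3), ∀ x ∈ U,
      (∑ t, FLV t x * pderivC (V i) t x) - ∑ t, V t x * pderivC (FLV i) t x = 0) :
    ∃ c : ℂ, ∀ (i : Fin 3), ∀ x ∈ U, V i x = c * FLV i x := by
  have hV : ∀ i, AnalyticAt ℂ (V i) 0 := fun i => hVan i 0 h0
  have hF : ∀ i x, AnalyticAt ℂ (FLV i) x := by
    rw [FLV_eq_lotkaVolterra]; exact analyticAt_lotkaVolterra lvMatrix
  set c := pderivZero (multiIndex 2 0 0) (V 0) / 4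
  have hrec := (lvRecurrence_pderivZero hV fun i => eventually_of_mem (hU.mem_nhds h0) (hinv i))
    |>.sub_const_mul (lvRecurrence_pderivZero (fun i => hF i 0)
      fun i => Eventually.of_forall fun x => sub_self _) c
  have hcoeff := hrec.eq_zero (by simp [pderivZero_multiIndex_two_zero_zero_FLV, c])
  refine ⟨c, fun i => ?_⟩
  have hW : AnalyticOnNhd ℂ (fun x => V i x - c * FLV i x) U :=
    (hVan i).sub fun x _ => analyticAt_const.mul (hF i x)
  have hloc : (fun x => V i x - c * FLV i x) =ᶠ[𝓝 0] 0 :=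
    eventuallyEq_zero_of_pderivZero_eq_zero (hW 0 h0) fun μ => by
      rw [pderivZero_sub (hV i) (by fun_prop), pderivZero_const_mul (hF i 0),
        ← multiIndex_count μ]
      exact hcoeff i _ _ _
  intro x hx
  exact sub_eq_zero.mp (hW.eqOn_zero_of_preconnected_of_eventuallyEq_zero hUconn h0 hloc hx)
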